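/- Quantitative soundness of violation classes (strengthening of Lemma 1 used in its inductive proof): for every STL formula φ with a classification criterion fixed as in the context, every violation class ψ ∈ Cls⁻(φ), every valuation θ ∈ Θ, and every signal w, the robustness satisfies ρ(w, φ) ≤ ρ(w, ψ(θ)). -/

import Mathlib

namespace STLClass

abbrev Signal (N : ℕ) := ℝ → Fin N → ℝ

def shift {N : ℕ} (w : Signal N) (t : ℝ) : Signal N := fun t' => w (t + t')

inductive STL (N : ℕ) : Type where
  | atom (f : (Fin N → ℝ) → ℝ)
  | falsum
  | not (φ : STL N)
  | and (φ₁ φ₂ : STL N)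
  | or (φ₁ φ₂ : STL N)
  | always (a b : ℝ) (φ : STL N)
  | event (a b : ℝ) (φ : STL N)
  | untl (a b : ℝ) (φ₁ φ₂ : STL N)

def STL.top {N : ℕ} : STL N := .not .falsum

noncomputable def robust {N : ℕ} : STL N → Signal N → EReal
  | .atom f, w => ((f (w 0) : ℝ) : EReal)
  | .falsum, _ => ⊥
  | .not φ, w => - robust φ w
  | .and φ₁ φ₂, w => min (robust φ₁ w) (robust φ₂ w)
  | .or φ₁ φ₂, w => max (robust φ₁ w) (robust φ₂ w)
  | .always a b φ, w => ⨅ t : Set.Icc a b, robust φ (shift w t.1)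
  | .event a b φ, w => ⨆ t : Set.Icc a b, robust φ (shift w t.1)
  | .untl a b φ₁ φ₂, w =>
      ⨆ t : Set.Icc a b,
        min (robust φ₂ (shift w t.1)) (⨅ t' : Set.Ico (0 : ℝ) t.1, robust φ₁ (shift w t'.1))

def Sat {N : ℕ} (w : Signal N) (φ : STL N) : Prop := 0 < robust φ w

def Vio {N : ℕ} (w : Signal N) (φ : STL N) : Prop := robust φ w < 0

/-- An STL formula together with a classification criterion: each temporal operator is
annotated with a natural number `k`, meaning that its interval is split into `k + 1`
consecutive segments (so the "positive integer" of the criterion is `k + 1`). -/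
inductive AForm (N : ℕ) : Type where
  | atom (f : (Fin N → ℝ) → ℝ)
  | falsum
  | not (φ : AForm N)
  | and (φ₁ φ₂ : AForm N)
  | or (φ₁ φ₂ : AForm N)
  | always (a b : ℝ) (k : ℕ) (φ : AForm N)
  | event (a b : ℝ) (k : ℕ) (φ : AForm N)
  | untl (a b : ℝ) (k : ℕ) (φ₁ φ₂ : AForm N)

/-- The underlying STL formula of an annotated formula. -/
def AForm.toSTL {N : ℕ} : AForm N → STL N
  | .atom f => .atom f
  | .falsum => .falsum
  | .not φ => .not φ.toSTL
  | .and φ₁ φ₂ => .and φ₁.toSTL φ₂.toSTL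
  | .or φ₁ φ₂ => .or φ₁.toSTL φ₂.toSTL
  | .always a b _ φ => .always a b φ.toSTL
  | .event a b _ φ => .event a b φ.toSTL
  | .untl a b _ φ₁ φ₂ => .untl a b φ₁.toSTL φ₂.toSTL

/-- Well-formedness: every temporal interval `[a, b]` satisfies `0 ≤ a < b`. -/
def AForm.WF {N : ℕ} : AForm N → Prop
  | .atom _ => True
  | .falsum => True
  | .not φ => φ.WF
  | .and φ₁ φ₂ => φ₁.WF ∧ φ₂.WF
  | .or φ₁ φ₂ => φ₁.WF ∧ φ₂.WF
  | .always a b _ φ => 0 ≤ a ∧ a < b ∧ φ.WF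
  | .event a b _ φ => 0 ≤ a ∧ a < b ∧ φ.WF
  | .untl a b _ φ₁ φ₂ => 0 ≤ a ∧ a < b ∧ φ₁.WF ∧ φ₂.WF

/-- A split of the interval `[a, b]` into `n` consecutive nonsingular segments:
`n + 1` strictly increasing points starting at `a` and ending at `b`.  The segment
`i` is `[pts i.castSucc, pts i.succ]`. -/
structure Split (a b : ℝ) (n : ℕ) : Type where
  pts : Fin (n + 1) → ℝ
  strictMono : StrictMono pts
  first : pts 0 = a
  last : pts (Fin.last n) = b

/-- The valuation space `Θ` of an annotated formula: a choice of admissible breakpoints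
for each temporal subformula. -/
def Val {N : ℕ} : AForm N → Type
  | .atom _ => PUnit
  | .falsum => PUnit
  | .not φ => Val φ
  | .and φ₁ φ₂ => Val φ₁ × Val φ₂
  | .or φ₁ φ₂ => Val φ₁ × Val φ₂
  | .always a b k φ => Split a b (k + 1) × Val φ
  | .event a b k φ => Split a b (k + 1) × Val φ
  | .untl a b k φ₁ φ₂ => Split a b (k + 1) × Val φ₁ × Val φ₂

/-- Finite conjunction of a list of STL formulas (empty conjunction is `⊤`). -/
def listAnd {N : ℕ} : List (STL N) → STL N
  | [] => STL.top
  | [φ] => φ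
  | φ :: φ' :: rest => .and φ (listAnd (φ' :: rest))

/-- Finite disjunction of a list of STL formulas (empty disjunction is `⊥`). -/
def listOr {N : ℕ} : List (STL N) → STL N
  | [] => .falsum
  | [φ] => φ
  | φ :: φ' :: rest => .or φ (listOr (φ' :: rest))

/-- `⋀_{i} f i`. -/
def iAnd {N : ℕ} {k : ℕ} (f : Fin k → STL N) : STL N := listAnd (List.ofFn f)

/-- `⋁_{i} f i`. -/
def iOr {N : ℕ} {k : ℕ} (f : Fin k → STL N) : STL N := listOr (List.ofFn f)

/-- `Cls true φ` is the set `Cls⁺(φ)` of satisfaction classes and `Cls false φ` is the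
set `Cls⁻(φ)` of violation classes; a class is represented by its instantiation map
`Θ → STL N` sending a valuation `θ` to the STL formula `ψ(θ)`. -/
def Cls {N : ℕ} : Bool → (φ : AForm N) → Set (Val φ → STL N)
  | b, .atom f =>
      {fun _ => if b then STL.falsum else STL.top, fun _ => STL.atom f}
  | _, .falsum => {fun _ => STL.falsum}
  | b, .not φ =>
      {c | ∃ ψ ∈ Cls (!b) φ, c = fun θ => STL.not (ψ θ)}
  | b, .and φ₁ φ₂ =>
      {c | ∃ ψ₁ ∈ Cls b φ₁, ∃ ψ₂ ∈ Cls b φ₂,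
        c = fun θ => STL.and (ψ₁ θ.1) (ψ₂ θ.2)}
  | b, .or φ₁ φ₂ =>
      {c | ∃ ψ₁ ∈ Cls b φ₁, ∃ ψ₂ ∈ Cls b φ₂,
        c = fun θ => STL.or (ψ₁ θ.1) (ψ₂ θ.2)}
  | b, .always _ _ k φ =>
      {c | ∃ ψ : Fin (k + 1) → Val φ → STL N, (∀ i, ψ i ∈ Cls b φ) ∧
        c = fun θ => iAnd fun i : Fin (k + 1) =>
          STL.always (θ.1.pts i.castSucc) (θ.1.pts i.succ) (ψ i θ.2)}
  | b, .event _ _ k φ =>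
      {c | ∃ ψ : Fin (k + 1) → Val φ → STL N, (∀ i, ψ i ∈ Cls b φ) ∧
        c = fun θ => iOr fun i : Fin (k + 1) =>
          STL.event (θ.1.pts i.castSucc) (θ.1.pts i.succ) (ψ i θ.2)}
  | b, .untl _ _ k φ₁ φ₂ =>
      {c | ∃ ψ : Fin (k + 1) → Val φ₁ → STL N, ∃ σ : Fin (k + 1) → Val φ₂ → STL N,
           ∃ ξ : Fin (k + 1) → Fin (k + 1) → Val φ₁ → STL N,
        (∀ i, ψ i ∈ Cls b φ₁) ∧ (∀ i, σ i ∈ Cls b φ₂) ∧ (∀ i j, ξ i j ∈ Cls b φ₁) ∧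
        c = fun θ => iOr fun i : Fin (k + 1) =>
          STL.and
            (STL.untl (θ.1.pts i.castSucc) (θ.1.pts i.succ) (ψ i θ.2.1) (σ i θ.2.2))
            (iAnd fun j : Fin (i : ℕ) =>
              STL.always (θ.1.pts (j.castLE i.isLt.le).castSucc)
                (θ.1.pts (j.castLE i.isLt.le).succ) (ξ i (j.castLE i.isLt.le) θ.2.1))}

/-- The satisfiable set `S(ψ)` of a class. -/
def SatSet {N : ℕ} (φ : AForm N) (ψ : Val φ → STL N) : Set (Signal N) :=
  {w | ∃ θ : Val φ, Sat w (ψ θ)}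

/-- The falsifiable set `V(ψ)` of a class. -/
def VioSet {N : ℕ} (φ : AForm N) (ψ : Val φ → STL N) : Set (Signal N) :=
  {w | ∃ θ : Val φ, Vio w (ψ θ)}

/-!
Satisfaction classes bound the robustness of `φ` from below and violation classes bound it
from above; the two statements are proved together by induction on `φ`, since negation
exchanges them. All connectives are monotone for robustness (negation antitone). Splitting
`[a, b]` into segments does not change the robustness of `□` and `◇`, which is an infimum or
supremum over a cover. For `φ₁ U_[a,b] φ₂`, a witness time `t` lies in a first segment `i`,
and every earlier segment lies in `[0, t)`, where `φ₁` is required to hold.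
-/

variable {N : ℕ}

instance : Preorder (STL N) where
  le φ ψ := ∀ w, robust φ w ≤ robust ψ w
  le_refl _ _ := le_rfl
  le_trans _ _ _ h₁ h₂ w := (h₁ w).trans (h₂ w)

namespace STL

theorem not_le_not {φ ψ : STL N} (h : φ ≤ ψ) : not ψ ≤ not φ :=
  fun w => EReal.neg_le_neg_iff.2 (h w)

theorem and_le_and {φ₁ φ₂ ψ₁ ψ₂ : STL N} (h₁ : φ₁ ≤ ψ₁) (h₂ : φ₂ ≤ ψ₂) :
    and φ₁ φ₂ ≤ and ψ₁ ψ₂ :=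
  fun w => min_le_min (h₁ w) (h₂ w)

theorem or_le_or {φ₁ φ₂ ψ₁ ψ₂ : STL N} (h₁ : φ₁ ≤ ψ₁) (h₂ : φ₂ ≤ ψ₂) :
    or φ₁ φ₂ ≤ or ψ₁ ψ₂ :=
  fun w => max_le_max (h₁ w) (h₂ w)

theorem always_le_always {a b : ℝ} {φ ψ : STL N} (h : φ ≤ ψ) :
    always a b φ ≤ always a b ψ :=
  fun _ => iInf_mono fun _ => h _

theorem event_le_event {a b : ℝ} {φ ψ : STL N} (h : φ ≤ ψ) :
    event a b φ ≤ event a b ψ :=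
  fun _ => iSup_mono fun _ => h _

theorem untl_le_untl {a b : ℝ} {φ₁ φ₂ ψ₁ ψ₂ : STL N} (h₁ : φ₁ ≤ ψ₁) (h₂ : φ₂ ≤ ψ₂) :
    untl a b φ₁ φ₂ ≤ untl a b ψ₁ ψ₂ :=
  fun _ => iSup_mono fun _ => min_le_min (h₂ _) (iInf_mono fun _ => h₁ _)

theorem and_le_left (φ ψ : STL N) : and φ ψ ≤ φ := fun _ => min_le_left _ _

theorem untl_le_untl_of_subset {a b c d : ℝ} (h : Set.Icc c d ⊆ Set.Icc a b)
    (φ₁ φ₂ : STL N) : untl c d φ₁ φ₂ ≤ untl a b φ₁ φ₂ :=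
  fun _ => iSup_le fun t => le_iSup_of_le (⟨t.1, h t.2⟩ : Set.Icc a b) le_rfl

end STL

theorem robust_listAnd (l : List (STL N)) (w : Signal N) :
    robust (listAnd l) w = ⨅ φ ∈ l, robust φ w := by
  match l with
  | [] => simp [listAnd, STL.top, robust]
  | [φ] => simp [listAnd]
  | φ :: φ' :: rest =>
    rw [listAnd, robust, robust_listAnd (φ' :: rest)]
    simp [iInf_or, iInf_inf_eq]

theorem robust_listOr (l : List (STL N)) (w : Signal N) :
    robust (listOr l) w = ⨆ φ ∈ l, robust φ w := by
  match l with
  | [] => simp [listOr, robust]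
  | [φ] => simp [listOr]
  | φ :: φ' :: rest =>
    rw [listOr, robust, robust_listOr (φ' :: rest)]
    simp [iSup_or, iSup_sup_eq]

theorem robust_iAnd {k : ℕ} (f : Fin k → STL N) (w : Signal N) :
    robust (iAnd f) w = ⨅ i, robust (f i) w := by
  simp_rw [iAnd, robust_listAnd, List.mem_ofFn', iInf_range]

theorem robust_iOr {k : ℕ} (f : Fin k → STL N) (w : Signal N) :
    robust (iOr f) w = ⨆ i, robust (f i) w := by
  simp_rw [iOr, robust_listOr, List.mem_ofFn', iSup_range]

theorem iAnd_mono {k : ℕ} {f g : Fin k → STL N} (h : ∀ i, f i ≤ g i) : iAnd f ≤ iAnd g :=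
  fun w => by simpa only [robust_iAnd] using iInf_mono fun i => h i w

theorem iOr_mono {k : ℕ} {f g : Fin k → STL N} (h : ∀ i, f i ≤ g i) : iOr f ≤ iOr g :=
  fun w => by simpa only [robust_iOr] using iSup_mono fun i => h i w

theorem le_iOr {k : ℕ} (f : Fin k → STL N) (i : Fin k) : f i ≤ iOr f :=
  fun w => by simpa only [robust_iOr] using le_iSup (fun i => robust (f i) w) i

theorem iOr_le {k : ℕ} {f : Fin k → STL N} {φ : STL N} (h : ∀ i, f i ≤ φ) : iOr f ≤ φ :=
  fun w => by simpa only [robust_iOr] using iSup_le fun i => h i w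

namespace Split

variable {a b : ℝ} {n : ℕ} (s : Split a b n)

theorem left_le (i : Fin (n + 1)) : a ≤ s.pts i  := by
  simpa [s.first] using s.strictMono.monotone (Fin.zero_le i)

theorem le_right (i : Fin (n + 1)) : s.pts i ≤ b  := by
  simpa [s.last] using s.strictMono.monotone (Fin.le_last i)

theorem segment_subset (i : Fin n) :
    Set.Icc (s.pts i.castSucc) (s.pts i.succ) ⊆ Set.Icc a b :=
  Set.Icc_subset_Icc (s.left_le _) (s.le_right _)

theorem exists_first_segment (s : Split a b (n + 1)) {t : ℝ} (ht : t ∈ Set.Icc a b) :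
    ∃ i : Fin (n + 1), t ∈ Set.Icc (s.pts i.castSucc) (s.pts i.succ) ∧
      ∀ j < i, s.pts j.succ < t := by
  classical
  have hex : ∃ i : Fin (n + 1), t ≤ s.pts i.succ := ⟨Fin.last n, by simpa [s.last] using ht.2⟩
  set i := Fin.find _ hex
  have below : ∀ j < i, s.pts j.succ < t := fun j hj => not_le.1 (Fin.find_min hex hj)
  refine ⟨i, ⟨?_, Fin.find_spec hex⟩, below⟩
  obtain hi | ⟨j, hj⟩ := Fin.eq_zero_or_eq_succ i
  · simpa [hi, s.first] using ht.1
  · rw [hj, ← Fin.succ_castSucc]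
    exact (below j.castSucc (hj ▸ Fin.castSucc_lt_succ)).le

end Split

namespace STL

variable {a b : ℝ} {n : ℕ}

theorem robust_iAnd_always_segments (s : Split a b (n + 1)) (φ : STL N) (w : Signal N) :
    robust (iAnd fun i : Fin (n + 1) => always (s.pts i.castSucc) (s.pts i.succ) φ) w =
      robust (always a b φ) w := by
  simp only [robust_iAnd, robust]
  refine le_antisymm (le_iInf fun t => ?_) (le_iInf fun i => le_iInf fun t => ?_)
  · obtain ⟨i, hi, -⟩ := s.exists_first_segment t.2
    exact iInf_le_of_le i (iInf_le_of_le ⟨t, hi⟩ le_rfl)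
  · exact iInf_le_of_le ⟨t, s.segment_subset i t.2⟩ le_rfl

theorem robust_iOr_event_segments (s : Split a b (n + 1)) (φ : STL N) (w : Signal N) :
    robust (iOr fun i : Fin (n + 1) => event (s.pts i.castSucc) (s.pts i.succ) φ) w =
      robust (event a b φ) w := by
  simp only [robust_iOr, robust]
  refine le_antisymm (iSup_le fun i => iSup_le fun t => ?_) (iSup_le fun t => ?_)
  · exact le_iSup_of_le ⟨t, s.segment_subset i t.2⟩ le_rfl
  · obtain ⟨i, hi, -⟩ := s.exists_first_segment t.2
    exact le_iSup_of_le i (le_iSup_of_le ⟨t, hi⟩ le_rfl)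

theorem untl_le_iOr_segments (ha : 0 ≤ a) (s : Split a b (n + 1)) (φ₁ φ₂ : STL N) :
    untl a b φ₁ φ₂ ≤ iOr fun i : Fin (n + 1) =>
      and (untl (s.pts i.castSucc) (s.pts i.succ) φ₁ φ₂)
        (iAnd fun j : Fin i => always (s.pts (j.castLE i.isLt.le).castSucc)
          (s.pts (j.castLE i.isLt.le).succ) φ₁) := fun w => by
  refine iSup_le fun t => ?_
  obtain ⟨i, hi, below⟩ := s.exists_first_segment t.2
  refine le_trans ?_ (le_iOr _ i w)
  refine le_min (le_iSup_of_le ⟨t, hi⟩ le_rfl) ?_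
  rw [robust_iAnd]
  refine le_iInf fun j => le_iInf fun t' =>
    (min_le_right _ _).trans (iInf_le_of_le ⟨t', ?_, ?_⟩ le_rfl)
  · exact (ha.trans (s.left_le _)).trans t'.2.1
  · exact t'.2.2.trans_lt (below _ (Fin.lt_def.2 j.isLt))

end STL

section

open STL

mutual

theorem sat_class_le : ∀ {φ : AForm N}, φ.WF → ∀ {ψ : Val φ → STL N}, ψ ∈ Cls true φ →
    ∀ θ, ψ θ ≤ φ.toSTL
  | .atom _, _, _, .inl rfl, _ => fun _ => by simp [robust]
  | .atom _, _, _, .inr rfl, _ => le_rfl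
  | .falsum, _, _, rfl, _ => le_rfl
  | .not φ, hφ, _, ⟨_, hψ, rfl⟩, θ => not_le_not (le_vio_class (φ := φ) hφ hψ θ)
  | .and _ _, hφ, _, ⟨_, hψ₁, _, hψ₂, rfl⟩, θ =>
    and_le_and (sat_class_le hφ.1 hψ₁ θ.1) (sat_class_le hφ.2 hψ₂ θ.2)
  | .or _ _, hφ, _, ⟨_, hψ₁, _, hψ₂, rfl⟩, θ =>
    or_le_or (sat_class_le hφ.1 hψ₁ θ.1) (sat_class_le hφ.2 hψ₂ θ.2)
  | .always _ _ _ _, hφ, _, ⟨_, hψ, rfl⟩, θ => fun w =>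
    (iAnd_mono (fun i => always_le_always (sat_class_le hφ.2.2 (hψ i) θ.2)) w).trans
      (robust_iAnd_always_segments θ.1 _ w).le
  | .event _ _ _ _, hφ, _, ⟨_, hψ, rfl⟩, θ => fun w =>
    (iOr_mono (fun i => event_le_event (sat_class_le hφ.2.2 (hψ i) θ.2)) w).trans
      (robust_iOr_event_segments θ.1 _ w).le
  | .untl _ _ _ _ _, hφ, _, ⟨_, _, _, hψ, hσ, _, rfl⟩, θ =>
    iOr_le fun i => (and_le_left _ _).trans <|
      (untl_le_untl (sat_class_le hφ.2.2.1 (hψ i) θ.2.1) (sat_class_le hφ.2.2.2 (hσ i) θ.2.2)).trans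
        (untl_le_untl_of_subset (θ.1.segment_subset i) _ _)

theorem le_vio_class : ∀ {φ : AForm N}, φ.WF → ∀ {ψ : Val φ → STL N}, ψ ∈ Cls false φ →
    ∀ θ, φ.toSTL ≤ ψ θ
  | .atom _, _, _, .inl rfl, _ => fun _ => by simp [robust, STL.top]
  | .atom _, _, _, .inr rfl, _ => le_rfl
  | .falsum, _, _, rfl, _ => le_rfl
  | .not φ, hφ, _, ⟨_, hψ, rfl⟩, θ => not_le_not (sat_class_le (φ := φ) hφ hψ θ)
  | .and _ _, hφ, _, ⟨_, hψ₁, _, hψ₂, rfl⟩, θ =>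
    and_le_and (le_vio_class hφ.1 hψ₁ θ.1) (le_vio_class hφ.2 hψ₂ θ.2)
  | .or _ _, hφ, _, ⟨_, hψ₁, _, hψ₂, rfl⟩, θ =>
    or_le_or (le_vio_class hφ.1 hψ₁ θ.1) (le_vio_class hφ.2 hψ₂ θ.2)
  | .always _ _ _ _, hφ, _, ⟨_, hψ, rfl⟩, θ => fun w =>
    (robust_iAnd_always_segments θ.1 _ w).ge.trans
      (iAnd_mono (fun i => always_le_always (le_vio_class hφ.2.2 (hψ i) θ.2)) w)
  | .event _ _ _ _, hφ, _, ⟨_, hψ, rfl⟩, θ => fun w =>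
    (robust_iOr_event_segments θ.1 _ w).ge.trans
      (iOr_mono (fun i => event_le_event (le_vio_class hφ.2.2 (hψ i) θ.2)) w)
  | .untl _ _ _ _ _, hφ, _, ⟨_, _, _, hψ, hσ, hξ, rfl⟩, θ =>
    (untl_le_iOr_segments hφ.1 θ.1 _ _).trans <| iOr_mono fun i =>
      and_le_and
        (untl_le_untl (le_vio_class hφ.2.2.1 (hψ i) θ.2.1) (le_vio_class hφ.2.2.2 (hσ i) θ.2.2))
        (iAnd_mono fun j => always_le_always (le_vio_class hφ.2.2.1 (hξ i _) θ.2.1))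

end

end

/-- Quantitative soundness of violation classes: for every `ψ ∈ Cls⁻(φ)`, every
valuation `θ ∈ Θ` and every signal `w`, `ρ(w, φ) ≤ ρ(w, ψ(θ))`. -/
theorem vio_class_quantitative {N : ℕ} (φ : AForm N) (hφ : φ.WF)
    (ψ : Val φ → STL N) (hψ : ψ ∈ Cls false φ) (θ : Val φ) (w : Signal N) :
    robust φ.toSTL w ≤ robust (ψ θ) w :=
  le_vio_class hφ hψ θ w

end STLClass
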